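/- In the higher spherical algebra S(m,λ), the relations (αβγσ)^m ρ = 0 and ω(γσαβ)^m = 0 hold; i.e. they follow from the defining relations (1)–(10). -/
import Mathlib


/-!
The higher spherical algebra `S(m,λ)` of Erdmann-Skowroński, realized as
the quotient of the path algebra of the quiver `Q_S` by the relations
(1)-(10).  Vertices `1,…,6` are encoded as `0,…,5 : Fin 6`.  The path
algebra is presented as the free algebra on the trivial paths
(idempotents) and the arrows, modulo the path-algebra relations
(orthogonal idempotents summing to `1`, source/target compatibility)
and the relations (1)-(10).  Paths compose left to right.
-/

namespace HigherSpherical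

/-- Arrows of `Q_S`: α:1→2, β:2→3, γ:3→4, σ:4→1, ν:3→5, δ:5→1, ρ:1→6, ω:6→3. -/
inductive SArr | al | be | ga | si | nu | de | rh | om

/-- Source vertex of an arrow. -/
def SArr.src : SArr → Fin 6
  | .al => 0 | .be => 1 | .ga => 2 | .si => 3
  | .nu => 2 | .de => 4 | .rh => 0 | .om => 5

/-- Target vertex of an arrow. -/
def SArr.tgt : SArr → Fin 6
  | .al => 1 | .be => 2 | .ga => 3 | .si => 0
  | .nu => 4 | .de => 0 | .rh => 5 | .om => 2

/-- The free algebra on trivial paths and arrows of `Q_S`. -/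
abbrev SFree (K : Type*) [Field K] := FreeAlgebra K (Fin 6 ⊕ SArr)

variable {K : Type*} [Field K]

/-- Trivial path at vertex `i`. -/
def fe (i : Fin 6) : SFree K := FreeAlgebra.ι K (Sum.inl i)
/-- The arrow `a` as an element of the free algebra. -/
def fa (a : SArr) : SFree K := FreeAlgebra.ι K (Sum.inr a)

def Al : SFree K := fa .al
def Be : SFree K := fa .be
def Ga : SFree K := fa .ga
def Si : SFree K := fa .si
def Nu : SFree K := fa .nu
def De : SFree K := fa .de
def Rh : SFree K := fa .rh
def Om : SFree K := fa .om

/-- The defining relations of `S(m,λ)`: path algebra relations together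
with the relations (1)-(10). -/
inductive SRel (K : Type*) [Field K] (m : ℕ) (l : K) : SFree K → SFree K → Prop
  | orth (i j : Fin 6) : SRel K m l (fe i * fe j) (if i = j then fe i else 0)
  | total : SRel K m l (∑ i, fe i) 1
  | src (a : SArr) : SRel K m l (fe a.src * fa a) (fa a)
  | tgt (a : SArr) : SRel K m l (fa a * fe a.tgt) (fa a)
  | r1 : SRel K m l (Be * Nu * De)
      (Be * Ga * Si + l • ((Be * Ga * Si * Al) ^ (m - 1) * (Be * Ga * Si)))
  | r2 : SRel K m l (Nu * De * Al)
      (Ga * Si * Al + l • ((Ga * Si * Al * Be) ^ (m - 1) * (Ga * Si * Al)))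
  | r3 : SRel K m l (Si * Rh * Om)
      (Si * Al * Be + l • ((Si * Al * Be * Ga) ^ (m - 1) * (Si * Al * Be)))
  | r4 : SRel K m l (Rh * Om * Ga)
      (Al * Be * Ga + l • ((Al * Be * Ga * Si) ^ (m - 1) * (Al * Be * Ga)))
  | r5 : SRel K m l (Al * Be * Nu) (Rh * Om * Nu)
  | r6 : SRel K m l (De * Al * Be) (De * Rh * Om)
  | r7 : SRel K m l (Om * Ga * Si) (Om * Nu * De)
  | r8 : SRel K m l (Ga * Si * Rh) (Nu * De * Rh)
  | r9 : SRel K m l ((Al * Be * Ga * Si) ^ m * Al) 0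
  | r10 : SRel K m l ((Ga * Si * Al * Be) ^ m * Ga) 0

/-- The higher spherical algebra `S(m,λ)`. -/
abbrev SAlg (K : Type*) [Field K] (m : ℕ) (l : K) := RingQuot (SRel K m l)

/-- The canonical projection onto `S(m,λ)`. -/
noncomputable def sq (K : Type*) [Field K] (m : ℕ) (l : K) :
    SFree K →ₐ[K] SAlg K m l := RingQuot.mkAlgHom K (SRel K m l)

end HigherSpherical


private lemma pow_shift {M : Type*} [Monoid M] (x y : M) (n : ℕ) :
    x * ((y * x) ^ n) = (x * y) ^ n * x := by
  induction n with
  | zero => simp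
  | succ k ih =>
    rw [pow_succ, ← mul_assoc, ih, pow_succ]
    rw [mul_assoc, mul_assoc, mul_assoc]

private lemma key1 {K : Type*} [Field K] {R : Type*} [Ring R] [Algebra K R]
    {m : ℕ} (hm : 2 ≤ m) {l : K} (hl : l ≠ 0) (a b g s n d r : R)
    (h1 : b * n * d = b * g * s + l • ((b * g * s * a) ^ (m - 1) * (b * g * s)))
    (h8 : g * s * r = n * d * r) :
    (a * b * g * s) ^ m * r = 0 := by
  have hm1 : m - 1 + 1 = m := Nat.sub_add_cancel (le_trans one_le_two hm)
  have mon : a * ((b * g * s * a) ^ (m - 1) * (b * g * s)) = (a * b * g * s) ^ m := by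
    rw [← mul_assoc, pow_shift a (b * g * s) (m - 1), mul_assoc]
    have h : a * (b * g * s) = a * b * g * s := by rw [← mul_assoc, ← mul_assoc]
    rw [h, ← pow_succ, hm1]
  have e : a * (b * n * d) = a * (b * g * s) + l • ((a * b * g * s) ^ m) := by
    rw [h1, mul_add, mul_smul_comm, mon]
  have main : (a * b * g * s) * r = (a * (b * n * d)) * r := by
    calc (a * b * g * s) * r = a * b * (g * s * r) := by simp only [mul_assoc]
      _ = a * b * (n * d * r) := by rw [h8]
      _ = (a * (b * n * d)) * r := by simp only [mul_assoc]
  rw [e, add_mul, smul_mul_assoc] at main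
  have h2 : a * (b * g * s) * r = a * b * g * s * r := by simp only [mul_assoc]
  rw [h2] at main
  have hz : l • ((a * b * g * s) ^ m * r) = 0 := (left_eq_add.mp main)
  rcases smul_eq_zero.mp hz with h | h
  · exact absurd h hl
  · exact h

private lemma key2 {K : Type*} [Field K] {R : Type*} [Ring R] [Algebra K R]
    {m : ℕ} (hm : 2 ≤ m) {l : K} (hl : l ≠ 0) (a b g s n d o : R)
    (h2 : n * d * a = g * s * a + l • ((g * s * a * b) ^ (m - 1) * (g * s * a)))
    (h7 : o * g * s = o * n * d) :
    o * (g * s * a * b) ^ m = 0 := by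
  have hm1 : m - 1 + 1 = m := Nat.sub_add_cancel (le_trans one_le_two hm)
  have mon : ((g * s * a * b) ^ (m - 1) * (g * s * a)) * b = (g * s * a * b) ^ m := by
    rw [mul_assoc, ← pow_succ, hm1]
  have e : (n * d * a) * b = (g * s * a) * b + l • ((g * s * a * b) ^ m) := by
    rw [h2, add_mul, smul_mul_assoc, mon]
  have main : o * (g * s * a * b) = o * ((n * d * a) * b) := by
    calc o * (g * s * a * b) = (o * g * s) * (a * b) := by simp only [mul_assoc]
      _ = (o * n * d) * (a * b) := by rw [h7]
      _ = o * ((n * d * a) * b) := by simp only [mul_assoc]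
  rw [e, mul_add, mul_smul_comm] at main
  have hz : l • (o * (g * s * a * b) ^ m) = 0 := (left_eq_add.mp main)
  rcases smul_eq_zero.mp hz with h | h
  · exact absurd h hl
  · exact h

open HigherSpherical in
/-- In the higher spherical algebra `S(m,λ)`, the relations
`(αβγσ)^m ρ = 0` and `ω(γσαβ)^m = 0` hold, i.e. follow from the defining
relations (1)-(10). -/
theorem S_derived_rel (K : Type*) [Field K] (m : ℕ) (hm : 2 ≤ m)
    (l : K) (hl : l ≠ 0) :
    sq K m l ((Al * Be * Ga * Si) ^ m * Rh) = 0 ∧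
    sq K m l (Om * (Ga * Si * Al * Be) ^ m) = 0 := by
  constructor
  · have h1 := RingQuot.mkAlgHom_rel K (SRel.r1 (K := K) (m := m) (l := l))
    have h8 := RingQuot.mkAlgHom_rel K (SRel.r8 (K := K) (m := m) (l := l))
    simp only [map_mul, map_add, map_smul, map_pow] at h1 h8
    have := key1 hm hl (sq K m l Al) (sq K m l Be) (sq K m l Ga) (sq K m l Si)
      (sq K m l Nu) (sq K m l De) (sq K m l Rh) h1 h8
    simpa only [map_mul, map_pow] using this
  · have h2 := RingQuot.mkAlgHom_rel K (SRel.r2 (K := K) (m := m) (l := l))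
    have h7 := RingQuot.mkAlgHom_rel K (SRel.r7 (K := K) (m := m) (l := l))
    simp only [map_mul, map_add, map_smul, map_pow] at h2 h7
    have := key2 hm hl (sq K m l Al) (sq K m l Be) (sq K m l Ga) (sq K m l Si)
      (sq K m l Nu) (sq K m l De) (sq K m l Om) h2 h7
    simpa only [map_mul, map_pow] using this
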